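/- With the notation of the previous statement, the span of all the gradients ∇f_{ijh}(P), over all 1 ≤ i < j < h ≤ c+2, has dimension at most c − 1. Specifically, assuming the minor (12) of N'(P) is nonzero, every ∇f_{ijh}(P) lies in the span of ∇f_{123}(P), ..., ∇f_{12,c+1}(P), via the relations (12)∇f_{ijh}(P) = (ij)∇f_{12h}(P) − (ih)∇f_{12j}(P) for i ∈ {1,2} < j < h ≤ c+1, and (12)∇f_{ijh}(P) = (ij)∇f_{12h}(P) − (ih)∇f_{12j}(P) + (jh)∇f_{12i}(P) for 2 < i < j < h ≤ c+1, both consequences of Plücker relations. -/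
import Mathlib


open Matrix MvPolynomial

/-- The gradient at the point `Pt` of the `3×3` minor of `N` on rows `i, j, h`. -/
noncomputable def gradAt {k c : ℕ} (Pt : Fin (k + 1) → ℂ)
    (N : Matrix (Fin (c + 2)) (Fin 3) (MvPolynomial (Fin (k + 1)) ℂ))
    (i j h : Fin (c + 2)) : Fin (k + 1) → ℂ :=
  fun m => eval Pt (pderiv m ((N.submatrix ![i, j, h] id).det))

/-- The `2×2` minor `(ab)` on rows `a, b` of the matrix obtained from `N` by
deleting the first column, evaluated at `Pt`. -/
noncomputable def mnrAt {k c : ℕ} (Pt : Fin (k + 1) → ℂ)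
    (N : Matrix (Fin (c + 2)) (Fin 3) (MvPolynomial (Fin (k + 1)) ℂ))
    (a b : Fin (c + 2)) : ℂ :=
  eval Pt (N a 1) * eval Pt (N b 2) - eval Pt (N b 1) * eval Pt (N a 2)

/-- Since the first column of `N` vanishes at `P`, the gradient of a `3×3` minor at `P`
is the combination of the gradients of the first-column entries weighted by `2×2` minors
of the last two columns. -/
lemma gradAt_eq {k c : ℕ} (Pt : Fin (k + 1) → ℂ)
    (N : Matrix (Fin (c + 2)) (Fin 3) (MvPolynomial (Fin (k + 1)) ℂ))
    (hA : ∀ r, eval Pt (N r 0) = 0) (i j h : Fin (c + 2)) :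
    gradAt Pt N i j h = fun m =>
      mnrAt Pt N j h * eval Pt (pderiv m (N i 0))
      - mnrAt Pt N i h * eval Pt (pderiv m (N j 0))
      + mnrAt Pt N i j * eval Pt (pderiv m (N h 0)) := by
  funext m
  simp only [gradAt, Matrix.det_fin_three, Matrix.submatrix_apply, id_eq,
    Matrix.cons_val_zero, Matrix.cons_val_one, Matrix.head_cons,
    Matrix.cons_val_two, Matrix.tail_cons,
    pderiv_mul, map_sub, _root_.map_add, _root_.map_mul, hA, mul_zero, zero_mul,
    add_zero, zero_add, mnrAt]
  ring

/-- At a point `P` of the linear space `L`, assuming the minor `(12) ≠ 0`, all gradients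
`∇f_{ijh}(P)` lie in the span of `∇f_{123}(P), ..., ∇f_{12,c+1}(P)` via the stated
Plücker relations, and the Jacobian matrix of the `3×3` minors has rank at most `c − 1`. -/
theorem jacobian_rank_at_most_c_sub_one (k c : ℕ) (hc : 3 ≤ c) (hk : c + 3 ≤ k)
    (N : Matrix (Fin (c + 2)) (Fin 3) (MvPolynomial (Fin (k + 1)) ℂ))
    (Pt : Fin (k + 1) → ℂ)
    (hlin : ∀ i j, (N i j).IsHomogeneous 1)
    (hcol1 : ∀ i : Fin (c + 1), N i.castSucc 0 = X (⟨(i : ℕ) + 1, by omega⟩ : Fin (k + 1)))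
    (hlast0 : N (Fin.last (c + 1)) 0 = 0)
    (hlast1 : N (Fin.last (c + 1)) 1 = X (⟨c + 2, by omega⟩ : Fin (k + 1)))
    (hlast2 : N (Fin.last (c + 1)) 2 = X (⟨c + 3, by omega⟩ : Fin (k + 1)))
    (hP : ∀ m : Fin (k + 1), 1 ≤ (m : ℕ) → (m : ℕ) ≤ c + 3 → Pt m = 0)
    (hrank : (Matrix.of fun (a : Fin (c + 1)) (b : Fin 2) =>
        eval Pt (N a.castSucc b.succ)).rank = 2)
    (h12 : mnrAt Pt N 0 1 ≠ 0) :
    (∀ i j h : Fin (c + 2), (i : ℕ) < 2 → 1 < (j : ℕ) → i < j → j < h → (h : ℕ) < c + 1 →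
      mnrAt Pt N 0 1 • gradAt Pt N i j h
        - mnrAt Pt N i j • gradAt Pt N 0 1 h
        + mnrAt Pt N i h • gradAt Pt N 0 1 j = 0) ∧
    (∀ i j h : Fin (c + 2), 1 < (i : ℕ) → i < j → j < h → (h : ℕ) < c + 1 →
      mnrAt Pt N 0 1 • gradAt Pt N i j h
        - mnrAt Pt N i j • gradAt Pt N 0 1 h
        + mnrAt Pt N i h • gradAt Pt N 0 1 j
        - mnrAt Pt N j h • gradAt Pt N 0 1 i = 0) ∧
    (∀ i j h : Fin (c + 2), i < j → j < h →
      gradAt Pt N i j h ∈ Submodule.span ℂ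
        {v : Fin (k + 1) → ℂ | ∃ t : Fin (c + 2),
          1 < (t : ℕ) ∧ (t : ℕ) < c + 1 ∧ v = gradAt Pt N 0 1 t}) ∧
    Module.finrank ℂ (Submodule.span ℂ
        {v : Fin (k + 1) → ℂ | ∃ i j h : Fin (c + 2),
          i < j ∧ j < h ∧ v = gradAt Pt N i j h}) ≤ c - 1 := by
  -- the first column of `N` vanishes at `Pt`
  have hA : ∀ r, eval Pt (N r 0) = 0 := by
    intro r
    induction r using Fin.lastCases with
    | last => rw [hlast0]; simp
    | cast i =>
        rw [hcol1 i]
        simp only [eval_X]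
        exact hP _ (by simp) (by have := i.isLt; simp; omega)
  have hB := gradAt_eq Pt N hA
  -- the minors `(a, last)` vanish at `Pt`
  have hlastm : ∀ a : Fin (c + 2), mnrAt Pt N a (Fin.last (c + 1)) = 0 := by
    intro a
    have e1 : Pt (⟨c + 2, by omega⟩ : Fin (k + 1)) = 0 := hP _ (by simp) (by simp)
    have e2 : Pt (⟨c + 3, by omega⟩ : Fin (k + 1)) = 0 := hP _ (by simp) (by simp)
    simp [mnrAt, hlast1, hlast2, e1, e2]
  have hdlast : ∀ m, eval Pt (pderiv m (N (Fin.last (c + 1)) 0)) = 0 := by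
    intro m; rw [hlast0]; simp
  -- degenerate gradients vanish
  have hG0 : gradAt Pt N 0 1 0 = 0 := by
    funext m; simp only [hB, mnrAt, Pi.zero_apply]; ring
  have hG1 : gradAt Pt N 0 1 1 = 0 := by
    funext m; simp only [hB, mnrAt, Pi.zero_apply]; ring
  have hGlast : gradAt Pt N 0 1 (Fin.last (c + 1)) = 0 := by
    funext m
    simp only [hB, Pi.zero_apply, hdlast m, mul_zero, add_zero]
    rw [hlastm 0, hlastm 1]; ring
  set S : Set (Fin (k + 1) → ℂ) :=
    {v : Fin (k + 1) → ℂ | ∃ t : Fin (c + 2),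
      1 < (t : ℕ) ∧ (t : ℕ) < c + 1 ∧ v = gradAt Pt N 0 1 t} with hS
  have part3 : ∀ i j h : Fin (c + 2), i < j → j < h →
      gradAt Pt N i j h ∈ Submodule.span ℂ S := by
    intro i j h _ _
    have key : ∀ t : Fin (c + 2), gradAt Pt N 0 1 t ∈ Submodule.span ℂ S := by
      intro t
      by_cases ht : 1 < (t : ℕ) ∧ (t : ℕ) < c + 1
      · exact Submodule.subset_span ⟨t, ht.1, ht.2, rfl⟩
      · have htv : (t : ℕ) = 0 ∨ (t : ℕ) = 1 ∨ (t : ℕ) = c + 1 := by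
          have := t.isLt; omega
        rcases htv with h0 | h0 | h0
        · have : t = 0 := Fin.ext (by simpa using h0)
          rw [this, hG0]; exact Submodule.zero_mem _
        · have : t = 1 := Fin.ext (by simpa using h0)
          rw [this, hG1]; exact Submodule.zero_mem _
        · have : t = Fin.last (c + 1) := Fin.ext (by simpa using h0)
          rw [this, hGlast]; exact Submodule.zero_mem _
    have rel : mnrAt Pt N 0 1 • gradAt Pt N i j h =
        mnrAt Pt N i j • gradAt Pt N 0 1 h - mnrAt Pt N i h • gradAt Pt N 0 1 j
          + mnrAt Pt N j h • gradAt Pt N 0 1 i := by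
      funext m
      simp only [hB, Pi.add_apply, Pi.sub_apply, Pi.smul_apply, smul_eq_mul, mnrAt]
      ring
    have heq : gradAt Pt N i j h = (mnrAt Pt N 0 1)⁻¹ •
        (mnrAt Pt N i j • gradAt Pt N 0 1 h - mnrAt Pt N i h • gradAt Pt N 0 1 j
          + mnrAt Pt N j h • gradAt Pt N 0 1 i) := by
      rw [← rel, smul_smul, inv_mul_cancel₀ h12, one_smul]
    rw [heq]
    exact Submodule.smul_mem _ _ (Submodule.add_mem _
      (Submodule.sub_mem _ (Submodule.smul_mem _ _ (key h))
        (Submodule.smul_mem _ _ (key j))) (Submodule.smul_mem _ _ (key i)))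
  refine ⟨?_, ?_, part3, ?_⟩
  · -- first Plücker relation, i ∈ {0, 1}
    intro i j h hi _ _ _ _
    have hi01 : i = 0 ∨ i = 1 := by
      have hv : (i : ℕ) = 0 ∨ (i : ℕ) = 1 := by omega
      rcases hv with h0 | h0
      · left; exact Fin.ext (by simpa using h0)
      · right; exact Fin.ext (by simpa using h0)
    rcases hi01 with rfl | rfl <;>
    · funext m
      simp only [hB, Pi.add_apply, Pi.sub_apply, Pi.smul_apply, smul_eq_mul,
        Pi.zero_apply, mnrAt]
      ring
  · -- second Plücker relation
    intro i j h _ _ _ _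
    funext m
    simp only [hB, Pi.add_apply, Pi.sub_apply, Pi.smul_apply, smul_eq_mul,
      Pi.zero_apply, mnrAt]
    ring
  · -- the span of all gradients has dimension at most `c - 1`
    have hcard : 0 < c - 1 := by omega
    set f : Fin (c - 1) → (Fin (k + 1) → ℂ) := fun t =>
      gradAt Pt N 0 1 ⟨(t : ℕ) + 2, by omega⟩ with hf
    have hmono : Submodule.span ℂ
        {v : Fin (k + 1) → ℂ | ∃ i j h : Fin (c + 2),
          i < j ∧ j < h ∧ v = gradAt Pt N i j h} ≤ Submodule.span ℂ (Set.range f) := by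
      rw [Submodule.span_le]
      rintro v ⟨i, j, h, hij, hjh, rfl⟩
      refine Submodule.span_le.mpr ?_ (part3 i j h hij hjh)
      rintro w ⟨t, ht1, ht2, rfl⟩
      have e : (⟨(t : ℕ) - 2 + 2, by omega⟩ : Fin (c + 2)) = t := by
        apply Fin.ext; simp; omega
      refine Submodule.subset_span ⟨⟨(t : ℕ) - 2, by omega⟩, ?_⟩
      show gradAt Pt N 0 1 ⟨(t : ℕ) - 2 + 2, by omega⟩ = gradAt Pt N 0 1 t
      rw [e]
    calc Module.finrank ℂ (Submodule.span ℂ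
          {v : Fin (k + 1) → ℂ | ∃ i j h : Fin (c + 2),
            i < j ∧ j < h ∧ v = gradAt Pt N i j h})
        ≤ Module.finrank ℂ (Submodule.span ℂ (Set.range f)) :=
          Submodule.finrank_mono hmono
      _ ≤ Fintype.card (Fin (c - 1)) := finrank_range_le_card f
      _ = c - 1 := by simp
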